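/- Let n_s ≥ 3, and let f̂: [0,1]^d → ℝ^n be realized by a ReLU network of depth L and width N. Then for every ε > 0 there exists a PLN-Net f of depth 2L, norm size n_s, and width 3·n_s·N from ℝ^d to ℝ^n such that sup_{x ∈ [0,1]^d} ‖f(x) − f̂(x)‖_∞ < ε. -/

import Mathlib

/-- Layer normalization on `ℝ^n`: `LN(h)ⱼ = (hⱼ − μ)/σ` when `σ ≠ 0`, and `0` when `σ = 0`. -/
noncomputable def LN {n : ℕ} (h : Fin n → ℝ) : Fin n → ℝ :=
  let μ : ℝ := (∑ i, h i) / n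
  let σ : ℝ := Real.sqrt ((∑ i, (h i - μ) ^ 2) / n)
  if σ = 0 then 0 else fun j => (h j - μ) / σ

/-- Parallel layer normalization: `N` consecutive blocks of size `ns`, `LN` on each. -/
noncomputable def PLN (ns N : ℕ) (h : Fin (N * ns) → ℝ) : Fin (N * ns) → ℝ :=
  fun i => LN (fun j : Fin ns => h (finProdFinEquiv (i.divNat, j))) i.modNat

/-- `PhiNet φ N L d m f`: `f : ℝ^d → ℝ^m` is a `φ`-network of depth `L`, each hidden
dimension being at most `N`. -/
inductive PhiNet (φ : ℝ → ℝ) (N : ℕ) : ℕ → (d m : ℕ) → ((Fin d → ℝ) → (Fin m → ℝ)) → Prop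
  | affine {d m : ℕ} (W : Matrix (Fin m) (Fin d) ℝ) (b : Fin m → ℝ) :
      PhiNet φ N 0 d m (fun x => W.mulVec x + b)
  | layer {L d k m : ℕ} (hk : k ≤ N) (W : Matrix (Fin k) (Fin d) ℝ) (b : Fin k → ℝ)
      (g : (Fin k → ℝ) → (Fin m → ℝ)) (hg : PhiNet φ N L k m g) :
      PhiNet φ N (L + 1) d m (fun x => g (fun i => φ ((W.mulVec x + b) i)))

/-- `PLNNet ns N L d m f`: `f : ℝ^d → ℝ^m` is a PLN-Net of depth `L` and norm size `ns`,
each hidden dimension being a multiple of `ns` of size at most `ns·N`. -/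
inductive PLNNet (ns N : ℕ) : ℕ → (d m : ℕ) → ((Fin d → ℝ) → (Fin m → ℝ)) → Prop
  | affine {d m : ℕ} (W : Matrix (Fin m) (Fin d) ℝ) (b : Fin m → ℝ) :
      PLNNet ns N 0 d m (fun x => W.mulVec x + b)
  | layer {L d k m : ℕ} (hk : k ≤ N) (W : Matrix (Fin (k * ns)) (Fin d) ℝ)
      (b : Fin (k * ns) → ℝ)
      (g : (Fin (k * ns) → ℝ) → (Fin m → ℝ)) (hg : PLNNet ns N L (k * ns) m g) :
      PLNNet ns N (L + 1) d m (fun x => g (PLN ns k (W.mulVec x + b)))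


/-!
On a block `(v, -v, 0, …, 0)` of size `n + 3`, layer normalization returns `√((n + 3) / 2) · sign v`
in its first coordinate; on `(v + R, R - v, -2R, 0, …, 0)` the difference of its first two outputs
is `√(2 (n + 3)) · v / √(3R² + v²)`. With `R = T / √3`, one PLN layer therefore produces `sign u`
and the saturating map `sat T u = T u / √(T² + u²)`, which is close to `u` when `T ≫ |u|`. A second
layer produces `sign u`, `sign (sign u + 1/2)` and `sat T (sat T u + M sign u - M)`, and an affine
combination of these is uniformly close to `max u 0` on `[-B, B]`: for `u > 0` it is
`sat T (sat T u)`, at `u = 0` it vanishes, and for `u < 0` it is a difference of two values of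
`sat T` far out on its flat negative tail. Each ReLU layer is replaced by these two PLN layers
(three blocks per neuron), and uniform continuity of the remaining network on compact sets closes
the induction on depth.
-/

open scoped Matrix

theorem LN_eq_smul_of_sum_eq_zero {m : ℕ} (h : Fin m → ℝ) (hsum : ∑ i, h i = 0) :
    LN h = (√((∑ i, h i ^ 2) / m))⁻¹ • h := by
  unfold LN
  simp only [hsum, zero_div, sub_zero]
  split_ifs with hσ
  · rw [hσ, inv_zero, zero_smul]
  · funext j
    simp [div_eq_inv_mul]

def dipole (n : ℕ) : Fin (n + 3) → ℝ := Fin.cons 1 (Fin.cons (-1) 0)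

noncomputable def anchor (n : ℕ) (T : ℝ) : Fin (n + 3) → ℝ :=
  Fin.cons (T / √3) (Fin.cons (T / √3) (Fin.cons (-(2 * T / √3)) 0))

noncomputable def sat (T v : ℝ) : ℝ := T * v / √(T ^ 2 + v ^ 2)

theorem LN_smul_dipole (n : ℕ) (v : ℝ) :
    LN (v • dipole n) 0 = √((n + 3) / 2) * Real.sign v := by
  rw [LN_eq_smul_of_sum_eq_zero _ (by simp [dipole, Fin.sum_univ_succ])]
  have hσ : √((∑ i, (v • dipole n) i ^ 2) / (n + 3 : ℕ)) = |v| / √((n + 3) / 2) := by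
    rw [← Real.sqrt_sq_eq_abs, ← Real.sqrt_div' _ (by positivity)]
    congr 1
    simp [dipole, Fin.sum_univ_succ]
    field_simp
    ring
  rw [Pi.smul_apply, hσ]
  simp only [Pi.smul_apply, dipole, Fin.cons_zero, smul_eq_mul, mul_one]
  rcases lt_trichotomy v 0 with hv | rfl | hv
  · rw [Real.sign_of_neg hv, abs_of_neg hv]
    field_simp [hv.ne]
  · simp
  · rw [Real.sign_of_pos hv, abs_of_pos hv]
    field_simp

theorem LN_smul_dipole_add_anchor_sub (n : ℕ) (T v : ℝ) :
    LN (v • dipole n + anchor n T) 0 - LN (v • dipole n + anchor n T) 1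
      = √(2 * (n + 3)) * v / √(T ^ 2 + v ^ 2) := by
  rw [LN_eq_smul_of_sum_eq_zero _ (by simp [dipole, anchor, Fin.sum_univ_succ]; ring)]
  have h3 : (√3) ^ 2 = 3 := Real.sq_sqrt (by norm_num)
  have hσ : √((∑ i, (v • dipole n + anchor n T) i ^ 2) / (n + 3 : ℕ))
      = √(T ^ 2 + v ^ 2) / √((n + 3) / 2) := by
    rw [← Real.sqrt_div' _ (by positivity)]
    congr 1
    simp [dipole, anchor, Fin.sum_univ_succ]
    field_simp
    linear_combination (-2 * T ^ 2) * h3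
  rw [Pi.smul_apply, Pi.smul_apply, ← smul_sub, hσ]
  simp only [Pi.add_apply, Pi.smul_apply, dipole, anchor, smul_eq_mul, Fin.cons_zero,
    Fin.cons_one]
  have h2 : √((n + 3) / 2) * 2 = √(2 * (n + 3)) := by
    rw [← Real.sqrt_sq zero_le_two, ← Real.sqrt_mul (by positivity), Real.sqrt_sq zero_le_two]
    ring_nf
  rw [inv_div, div_mul_eq_mul_div, ← h2]
  ring

section sat

variable {T : ℝ}

theorem sat_zero (T : ℝ) : sat T 0 = 0 := by simp [sat]

theorem le_sqrt_sq_add_sq (T v : ℝ) : T ≤ √(T ^ 2 + v ^ 2) :=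
  Real.le_sqrt_of_sq_le (by nlinarith)

theorem abs_le_sqrt_sq_add_sq (T v : ℝ) : |v| ≤ √(T ^ 2 + v ^ 2) :=
  Real.abs_le_sqrt (by nlinarith)

theorem abs_sat_le (T v : ℝ) : |sat T v| ≤ |v| := by
  have hS : |T| ≤ √(T ^ 2 + v ^ 2) := Real.abs_le_sqrt (by nlinarith)
  rw [sat, mul_comm, mul_div_assoc, abs_mul, abs_div, abs_of_nonneg (Real.sqrt_nonneg _)]
  exact mul_le_of_le_one_right (abs_nonneg v) (div_le_one_of_le₀ hS (Real.sqrt_nonneg _))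

theorem abs_sat_sub_self_le (hT : 0 < T) (v : ℝ) : |sat T v - v| ≤ |v| ^ 3 / (2 * T ^ 2) := by
  set S := √(T ^ 2 + v ^ 2) with hS_def
  have hTS : T ≤ S := le_sqrt_sq_add_sq T v
  have hS : 0 < S := hT.trans_le hTS
  have hS2 : S ^ 2 = T ^ 2 + v ^ 2 := Real.sq_sqrt (by positivity)
  have key : sat T v - v = -v ^ 3 / (S * (T + S)) := by
    rw [sat, ← hS_def]
    field_simp
    linear_combination (-v) * hS2
  rw [key, abs_div, abs_neg, abs_pow, abs_of_pos (mul_pos hS (by linarith))]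
  exact div_le_div_of_nonneg_left (by positivity) (by positivity) (by nlinarith)

theorem abs_sat_sub_sat_le (hT : 0 < T) (a b : ℝ) :
    |sat T a - sat T b| ≤ 2 * T * |a - b| / √(T ^ 2 + a ^ 2) := by
  set A := √(T ^ 2 + a ^ 2) with hA_def
  set B := √(T ^ 2 + b ^ 2) with hB_def
  have hA : 0 < A := hT.trans_le (le_sqrt_sq_add_sq T a)
  have hB : 0 < B := hT.trans_le (le_sqrt_sq_add_sq T b)
  have hA2 : A ^ 2 = T ^ 2 + a ^ 2 := Real.sq_sqrt (by positivity)
  have hB2 : B ^ 2 = T ^ 2 + b ^ 2 := Real.sq_sqrt (by positivity)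
  have haA : |a| ≤ A := abs_le_sqrt_sq_add_sq T a
  have hbB : |b| ≤ B := abs_le_sqrt_sq_add_sq T b
  have key : sat T a - sat T b
      = T * (a - b) * (B * (A + B) - b * (a + b)) / (A * B * (A + B)) := by
    rw [sat, sat, ← hA_def, ← hB_def]
    field_simp
    linear_combination b * hB2 - b * hA2
  have hnum : |B * (A + B) - b * (a + b)| ≤ 2 * (B * (A + B)) := by
    have : |b * (a + b)| ≤ B * (A + B) := by
      rw [abs_mul]
      exact mul_le_mul hbB ((abs_add_le a b).trans (add_le_add haA hbB)) (abs_nonneg _) hB.le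
    calc |B * (A + B) - b * (a + b)| ≤ |B * (A + B)| + |b * (a + b)| := abs_sub _ _
      _ ≤ 2 * (B * (A + B)) := by rw [abs_of_pos (by positivity)]; linarith
  rw [key, abs_div, abs_of_pos (by positivity : 0 < A * B * (A + B)), abs_mul, abs_mul,
    abs_of_pos hT]
  calc T * |a - b| * |B * (A + B) - b * (a + b)| / (A * B * (A + B))
      ≤ T * |a - b| * (2 * (B * (A + B))) / (A * B * (A + B)) := by gcongr
    _ = 2 * T * |a - b| / A := by field_simp

end sat

-- The last three terms depend only on `sign u`: they cancel the first term at `u = 0`, where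
-- it equals `sat T (-M)`, and for `u < 0`, where it is close to `sat T (-2M)`.
noncomputable def reluGadget (T M u : ℝ) : ℝ :=
  sat T (sat T u + M * Real.sign u - M)
    + (sat T (-(2 * M)) / 2 - sat T (-M)) * Real.sign (Real.sign u + 2⁻¹)
    + sat T (-M) * Real.sign u - sat T (-(2 * M)) / 2

section reluGadget

variable {T M u : ℝ}

theorem reluGadget_of_pos (hu : 0 < u) : reluGadget T M u = sat T (sat T u) := by
  rw [reluGadget, Real.sign_of_pos hu, Real.sign_of_pos (by norm_num : (0 : ℝ) < 1 + 2⁻¹)]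
  ring_nf

theorem reluGadget_zero (T M : ℝ) : reluGadget T M 0 = 0 := by
  rw [reluGadget, Real.sign_zero, sat_zero, Real.sign_of_pos (by norm_num : (0 : ℝ) < 0 + 2⁻¹)]
  ring_nf

theorem reluGadget_of_neg (hu : u < 0) :
    reluGadget T M u = sat T (sat T u - 2 * M) - sat T (-(2 * M)) := by
  rw [reluGadget, Real.sign_of_neg hu, Real.sign_of_neg (by norm_num : (-1 : ℝ) + 2⁻¹ < 0)]
  ring_nf

theorem abs_reluGadget_sub_relu_le (hT : 0 < T) (hM : 0 < M) (u : ℝ) :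
    |reluGadget T M u - max u 0| ≤ max (|u| ^ 3 / T ^ 2) (T * |u| / M) := by
  have hsat := abs_sat_le T u
  rcases lt_trichotomy u 0 with hu | rfl | hu
  · apply le_max_of_le_right
    have hden : 2 * M ≤ √(T ^ 2 + (-(2 * M)) ^ 2) := by
      simpa [abs_of_pos hM] using abs_le_sqrt_sq_add_sq T (-(2 * M))
    rw [reluGadget_of_neg hu, max_eq_right hu.le, sub_zero, abs_sub_comm]
    calc |sat T (-(2 * M)) - sat T (sat T u - 2 * M)|
        ≤ 2 * T * |sat T u| / √(T ^ 2 + (-(2 * M)) ^ 2) := by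
          simpa [abs_sub_comm] using abs_sat_sub_sat_le hT (-(2 * M)) (sat T u - 2 * M)
      _ ≤ 2 * T * |u| / (2 * M) := by gcongr
      _ = T * |u| / M := by field_simp
  · simp [reluGadget_zero]
  · apply le_max_of_le_left
    rw [reluGadget_of_pos hu, max_eq_left hu.le]
    have h₁ := abs_sat_sub_self_le hT (sat T u)
    have h₂ := abs_sat_sub_self_le hT u
    have h₃ : |sat T u| ^ 3 ≤ |u| ^ 3 := by gcongr
    calc |sat T (sat T u) - u| ≤ |sat T (sat T u) - sat T u| + |sat T u - u| := abs_sub_le _ _ _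
      _ ≤ |u| ^ 3 / T ^ 2 := by
        rw [show |u| ^ 3 / T ^ 2 = |u| ^ 3 / (2 * T ^ 2) + |u| ^ 3 / (2 * T ^ 2) by ring]
        gcongr
        exact h₁.trans (by gcongr)

theorem exists_reluGadget_approx {B δ : ℝ} (hB : 0 ≤ B) (hδ : 0 < δ) :
    ∃ T M : ℝ, ∀ u, |u| ≤ B → |reluGadget T M u - max u 0| ≤ δ := by
  set T := B ^ 3 / δ + 1 with hT_def
  have hT1 : 1 ≤ T := le_add_of_nonneg_left (by positivity)
  have hT : 0 < T := by positivity
  set M := T * B / δ + 1 with hM_def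
  have hM : 0 < M := by positivity
  refine ⟨T, M, fun u hu => (abs_reluGadget_sub_relu_le hT hM u).trans (max_le ?_ ?_)⟩
  · have : B ^ 3 ≤ δ * T ^ 2 :=
      calc B ^ 3 ≤ δ * T := by rw [hT_def]; field_simp; linarith
        _ ≤ δ * T ^ 2 := by gcongr; exact le_self_pow₀ hT1 two_ne_zero
    rw [div_le_iff₀ (by positivity)]
    calc |u| ^ 3 ≤ B ^ 3 := by gcongr
      _ ≤ δ * T ^ 2 := this
  · have : T * B ≤ δ * M := by rw [hM_def]; field_simp; linarith
    rw [div_le_iff₀ hM]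
    calc T * |u| ≤ T * B := by gcongr
      _ ≤ δ * M := this

end reluGadget

theorem PLN_finProdFinEquiv {ns K : ℕ} (h : Fin (K * ns) → ℝ) (β : Fin K) (j : Fin ns) :
    PLN ns K h (finProdFinEquiv (β, j)) = LN (fun j' => h (finProdFinEquiv (β, j'))) j := by
  have hβj := finProdFinEquiv.symm_apply_apply (β, j)
  rw [finProdFinEquiv_symm_apply, Prod.mk.injEq] at hβj
  rw [PLN, hβj.1, hβj.2]

theorem exists_PLN_blockwise {d a k ns : ℕ} (ℓ : Fin a → Fin k → Fin d → ℝ) (π : Fin ns → ℝ)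
    (r : Fin a → Fin k → Fin ns → ℝ) :
    ∃ (W : Matrix (Fin (a * k * ns)) (Fin d) ℝ) (b : Fin (a * k * ns) → ℝ),
      ∀ y t i j, PLN ns (a * k) (W *ᵥ y + b) (finProdFinEquiv (finProdFinEquiv (t, i), j))
        = LN ((ℓ t i ⬝ᵥ y) • π + r t i) j := by
  let ι (p : Fin (a * k * ns)) : Fin a × Fin k × Fin ns :=
    ((finProdFinEquiv.symm (finProdFinEquiv.symm p).1).1,
      (finProdFinEquiv.symm (finProdFinEquiv.symm p).1).2, (finProdFinEquiv.symm p).2)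
  refine ⟨Matrix.of fun p q => π (ι p).2.2 * ℓ (ι p).1 (ι p).2.1 q,
    fun p => r (ι p).1 (ι p).2.1 (ι p).2.2, fun y t i j => ?_⟩
  rw [PLN_finProdFinEquiv]
  congr 1
  funext j'
  simp only [ι, Matrix.mulVec, dotProduct, Matrix.of_apply, Pi.add_apply, Pi.smul_apply,
    Equiv.symm_apply_apply, smul_eq_mul, Finset.sum_mul]
  congr 1
  exact Finset.sum_congr rfl fun q _ => by ring

theorem Real.sign_sign (r : ℝ) : Real.sign (Real.sign r) = Real.sign r := by
  rcases Real.sign_apply_eq r with h | h | h <;> rw [h]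
  · exact Real.sign_of_neg (by norm_num)
  · exact Real.sign_zero
  · exact Real.sign_one

theorem exists_PLN_two_layer_eq_reluGadget (n k : ℕ) (T M : ℝ) :
    ∃ (W₁ : Matrix (Fin (2 * k * (n + 3))) (Fin k) ℝ) (b₁ : Fin (2 * k * (n + 3)) → ℝ)
      (W₂ : Matrix (Fin (3 * k * (n + 3))) (Fin (2 * k * (n + 3))) ℝ)
      (b₂ : Fin (3 * k * (n + 3)) → ℝ) (O : Matrix (Fin k) (Fin (3 * k * (n + 3))) ℝ)
      (o : Fin k → ℝ), ∀ y i,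
        (O *ᵥ PLN (n + 3) (3 * k) (W₂ *ᵥ PLN (n + 3) (2 * k) (W₁ *ᵥ y + b₁) + b₂) + o) i
          = reluGadget T M (y i) := by
  set cs := √((n + 3 : ℝ) / 2)
  set cd := √(2 * (n + 3 : ℝ)) with hcd_def
  have hcs : cs ≠ 0 := by positivity
  have hcd : cd ≠ 0 := by positivity
  have read_sign (v : ℝ) : cs⁻¹ * LN (v • dipole n) 0 = Real.sign v := by
    rw [LN_smul_dipole, ← mul_assoc, inv_mul_cancel₀ hcs, one_mul]
  have read_sat (v : ℝ) :
      T / cd * (LN (v • dipole n + anchor n T) 0 - LN (v • dipole n + anchor n T) 1)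
        = sat T v := by
    rw [LN_smul_dipole_add_anchor_sub, ← hcd_def, sat]
    field_simp
  let p₁ (t : Fin 2) (i : Fin k) (j : Fin (n + 3)) : Fin (2 * k * (n + 3)) :=
    finProdFinEquiv (finProdFinEquiv (t, i), j)
  let p₂ (t : Fin 3) (i : Fin k) (j : Fin (n + 3)) : Fin (3 * k * (n + 3)) :=
    finProdFinEquiv (finProdFinEquiv (t, i), j)
  obtain ⟨W₁, b₁, h₁⟩ := exists_PLN_blockwise (fun (_ : Fin 2) i => Pi.single i 1) (dipole n)
    (fun t _ => ![0, anchor n T] t)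
  obtain ⟨W₂, b₂, h₂⟩ := exists_PLN_blockwise
    (fun t i => ![Pi.single (p₁ 0 i 0) cs⁻¹, Pi.single (p₁ 0 i 0) cs⁻¹,
      Pi.single (p₁ 1 i 0) (T / cd) - Pi.single (p₁ 1 i 1) (T / cd)
        + Pi.single (p₁ 0 i 0) (M * cs⁻¹)] t) (dipole n)
    (fun t _ => ![0, (2⁻¹ : ℝ) • dipole n, anchor n T - M • dipole n] t)
  refine ⟨W₁, b₁, W₂, b₂, Matrix.of fun i =>
    Pi.single (p₂ 2 i 0) (T / cd) - Pi.single (p₂ 2 i 1) (T / cd)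
      + Pi.single (p₂ 1 i 0) ((sat T (-(2 * M)) / 2 - sat T (-M)) * cs⁻¹)
      + Pi.single (p₂ 0 i 0) (sat T (-M) * cs⁻¹),
    fun _ => -(sat T (-(2 * M)) / 2), fun y i => ?_⟩
  set H₁ := PLN (n + 3) (2 * k) (W₁ *ᵥ y + b₁)
  set H₂ := PLN (n + 3) (3 * k) (W₂ *ᵥ H₁ + b₂)
  have sign₁ : cs⁻¹ * H₁ (p₁ 0 i 0) = Real.sign (y i) := by
    simp only [H₁, p₁, h₁]
    simpa using read_sign (y i)
  have sat₁ : T / cd * (H₁ (p₁ 1 i 0) - H₁ (p₁ 1 i 1)) = sat T (y i) := by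
    simp only [H₁, p₁, h₁]
    simpa using read_sat (y i)
  have sign₂ : cs⁻¹ * H₂ (p₂ 0 i 0) = Real.sign (y i) := by
    simp only [H₂, p₂, h₂, Matrix.cons_val_zero, single_dotProduct, sign₁, add_zero, read_sign,
      Real.sign_sign]
  have nonneg₂ : cs⁻¹ * H₂ (p₂ 1 i 0) = Real.sign (Real.sign (y i) + 2⁻¹) := by
    simp only [H₂, p₂, h₂, Matrix.cons_val_one, Matrix.cons_val_zero, single_dotProduct, sign₁,
      ← add_smul, read_sign]
  have sat₂ : T / cd * (H₂ (p₂ 2 i 0) - H₂ (p₂ 2 i 1))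
      = sat T (sat T (y i) + M * Real.sign (y i) - M) := by
    simp only [H₂, p₂, h₂, Matrix.cons_val_two, Matrix.tail_cons, Matrix.head_cons, add_dotProduct,
      sub_dotProduct, single_dotProduct]
    have regroup (a : ℝ) : a • dipole n + (anchor n T - M • dipole n)
        = (a - M) • dipole n + anchor n T := by
      rw [sub_smul]; abel
    rw [regroup, read_sat, ← sat₁, ← sign₁]
    ring_nf
  rw [Pi.add_apply]
  simp only [Matrix.mulVec, Matrix.of_apply, add_dotProduct, sub_dotProduct, single_dotProduct]
  rw [reluGadget, ← sat₂, ← nonneg₂, ← sign₂]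
  ring

theorem exists_PLN_two_layer_approx_relu (n k : ℕ) {B δ : ℝ} (hB : 0 ≤ B) (hδ : 0 < δ) :
    ∃ (W₁ : Matrix (Fin (2 * k * (n + 3))) (Fin k) ℝ) (b₁ : Fin (2 * k * (n + 3)) → ℝ)
      (W₂ : Matrix (Fin (3 * k * (n + 3))) (Fin (2 * k * (n + 3))) ℝ)
      (b₂ : Fin (3 * k * (n + 3)) → ℝ) (O : Matrix (Fin k) (Fin (3 * k * (n + 3))) ℝ)
      (o : Fin k → ℝ), ∀ y : Fin k → ℝ, ‖y‖ ≤ B →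
        ‖O *ᵥ PLN (n + 3) (3 * k) (W₂ *ᵥ PLN (n + 3) (2 * k) (W₁ *ᵥ y + b₁) + b₂) + o
          - fun i => max (y i) 0‖ ≤ δ := by
  obtain ⟨T, M, happrox⟩ := exists_reluGadget_approx hB hδ
  obtain ⟨W₁, b₁, W₂, b₂, O, o, hgadget⟩ := exists_PLN_two_layer_eq_reluGadget n k T M
  refine ⟨W₁, b₁, W₂, b₂, O, o, fun y hy => (pi_norm_le_iff_of_nonneg hδ.le).2 fun i => ?_⟩
  rw [Pi.sub_apply, hgadget, Real.norm_eq_abs]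
  exact happrox _ ((Real.norm_eq_abs _ ▸ norm_le_pi_norm y i).trans hy)

theorem PLNNet.comp_mulVec_add {ns N L k m e : ℕ} {g : (Fin k → ℝ) → (Fin m → ℝ)}
    (hg : PLNNet ns N L k m g) (A : Matrix (Fin k) (Fin e) ℝ) (c : Fin k → ℝ) :
    PLNNet ns N L e m (fun x => g (A *ᵥ x + c)) := by
  have key {k' : ℕ} (W : Matrix (Fin k') (Fin k) ℝ) (b : Fin k' → ℝ) (x : Fin e → ℝ) :
      W *ᵥ (A *ᵥ x + c) + b = (W * A) *ᵥ x + (W *ᵥ c + b) := by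
    rw [Matrix.mulVec_add, Matrix.mulVec_mulVec, add_assoc]
  cases hg with
  | affine W b => simpa only [key] using PLNNet.affine (W * A) (W *ᵥ c + b)
  | layer hk W b g' hg' => simpa only [key] using PLNNet.layer hk (W * A) (W *ᵥ c + b) g' hg'

theorem PhiNet.continuous {φ : ℝ → ℝ} (hφ : Continuous φ) {N L d m : ℕ}
    {f : (Fin d → ℝ) → (Fin m → ℝ)} (hf : PhiNet φ N L d m f) : Continuous f := by
  induction hf with
  | affine W b => fun_prop
  | layer _ W b _ _ ih => exact ih.comp (by fun_prop)

theorem PhiNet.exists_PLNNet_approx (n : ℕ) {N L d m : ℕ} {g : (Fin d → ℝ) → (Fin m → ℝ)}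
    (hg : PhiNet (fun x => max x 0) N L d m g) {K : Set (Fin d → ℝ)} (hK : IsCompact K)
    {ε : ℝ} (hε : 0 < ε) :
    ∃ f, PLNNet (n + 3) (3 * N) (2 * L) d m f ∧ ∀ x ∈ K, ‖f x - g x‖ < ε := by
  induction hg generalizing ε with
  | affine W b => exact ⟨_, PLNNet.affine W b, fun x _ => by simpa using hε⟩
  | @layer L d k m hk A c g hg ih =>
    set z : (Fin d → ℝ) → (Fin k → ℝ) := fun x i => max ((A *ᵥ x + c) i) 0
    have hK₁ : IsCompact (Metric.cthickening 1 (z '' K)) := (hK.image (by fun_prop)).cthickening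
    obtain ⟨δ₀, hδ₀, hg_uc⟩ := Metric.uniformContinuousOn_iff.1
      (hK₁.uniformContinuousOn_of_continuous (hg.continuous (by fun_prop)).continuousOn)
      (ε / 2) (half_pos hε)
    obtain ⟨fg, hfg, hfg_approx⟩ := ih hK₁ (half_pos hε)
    obtain ⟨B, hB, hAB⟩ :=
      (hK.image (f := fun x => A *ᵥ x + c) (by fun_prop)).isBounded.exists_pos_norm_le
    obtain ⟨W₁, b₁, W₂, b₂, O, o, hgadget⟩ :=
      exists_PLN_two_layer_approx_relu n k hB.le (lt_min one_pos (half_pos hδ₀))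
    refine ⟨fun x => fg (O *ᵥ PLN (n + 3) (3 * k)
      (W₂ *ᵥ PLN (n + 3) (2 * k) (W₁ *ᵥ (A *ᵥ x + c) + b₁) + b₂) + o), ?_, fun x hx => ?_⟩
    · have := (((hfg.comp_mulVec_add O o).layer (by omega) W₂ b₂).layer (by omega) W₁ b₁)
      exact this.comp_mulVec_add A c
    · set y := O *ᵥ PLN (n + 3) (3 * k)
        (W₂ *ᵥ PLN (n + 3) (2 * k) (W₁ *ᵥ (A *ᵥ x + c) + b₁) + b₂) + o
      have hyz : dist y (z x) ≤ min 1 (δ₀ / 2) := by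
        rw [dist_eq_norm]
        exact hgadget _ (hAB _ ⟨x, hx, rfl⟩)
      have hz : z x ∈ Metric.cthickening 1 (z '' K) :=
        Metric.self_subset_cthickening _ ⟨x, hx, rfl⟩
      have hy : y ∈ Metric.cthickening 1 (z '' K) :=
        Metric.mem_cthickening_of_dist_le _ _ _ _ ⟨x, hx, rfl⟩ (hyz.trans (min_le_left _ _))
      have hδ : dist y (z x) < δ₀ := hyz.trans_lt ((min_le_right _ _).trans_lt (half_lt_self hδ₀))
      calc ‖fg y - g (z x)‖ ≤ ‖fg y - g y‖ + ‖g y - g (z x)‖ :=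
            norm_sub_le_norm_sub_add_norm_sub _ _ _
        _ < ε / 2 + ε / 2 :=
            add_lt_add (hfg_approx y hy) (dist_eq_norm (g y) _ ▸ hg_uc y hy _ hz hδ)
        _ = ε := add_halves ε

/-- Approximation of ReLU networks by PLN-Nets: every ReLU network of depth `L` and
width `N` from `[0,1]^d` to `ℝ^n` is `ε`-approximated in the sup norm by a PLN-Net of
depth `2L`, norm size `n_s ≥ 3`, and width `3·n_s·N`. -/
theorem PLNNet_approximates_reluNet (ns N L d n : ℕ) (hns : 3 ≤ ns)
    (fh : (Fin d → ℝ) → (Fin n → ℝ)) (hfh : PhiNet (fun x => max x 0) N L d n fh)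
    (ε : ℝ) (hε : 0 < ε) :
    ∃ f : (Fin d → ℝ) → (Fin n → ℝ), PLNNet ns (3 * N) (2 * L) d n f ∧
      ∀ x ∈ Set.Icc (0 : Fin d → ℝ) 1, ‖f x - fh x‖ < ε := by
  obtain ⟨k, rfl⟩ := Nat.exists_eq_add_of_le' hns
  exact hfh.exists_PLNNet_approx k isCompact_Icc hε
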